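/- Let b ∈ S((ℤ^n)^p) be a Schwartz sequence, P_j a homogeneous polynomial of degree j on ℝ^n, r ∈ ℕ, φ a real-valued function on ℤ^n × (ℤ^n)^p, and define h(s,k,l) := b(l)P_j(k)e^{iφ(k,l)}/(|k|^{s+r}|k+ĺ_1|²⋯|k+ĺ_p|²) (set to 0 when some denominator vanishes for k ≠ 0). Then for all s ∈ ℂ with Re(s) > n + j − r − 2p, the double series Σ'_{(k,l)} h(s,k,l) over k ∈ ℤ^n \ {0} and l ∈ (ℤ^n)^p is absolutely summable; in particular the order of summation over k and l may be interchanged. -/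

import Mathlib

/-!
For `k ≠ 0` and all `k + ĺ_i ≠ 0` we have `|k| ≤ (1 + |ĺ_i|) |k + ĺ_i|` and
`(1 + |ĺ_i|)² ≤ (1 + p)² (1 + |l|²)`, so together with `|P_j(k)| ≤ C |k|^j`
the summand is dominated by `|k|^{j - Re s - r - 2p} · |b(l)| (1 + |l|²)^p`.
The first factor is summable over `ℤ^n` since the exponent is `< -n` (a `p`-series over a
lattice), the second over `(ℤ^n)^p` since `b` decays faster than any power. Absolute
summability on the product then lets the two iterated sums be interchanged.
-/

open scoped BigOperators

noncomputable def znorm {n : ℕ} (k : Fin n → ℤ) : ℝ :=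
  Real.sqrt (∑ i, ((k i : ℝ)) ^ 2)

/-- The summand `h(s,k,l) = b(l) P_j(k) e^{iφ(k,l)} / (|k|^{s+r} |k+ĺ_1|²⋯|k+ĺ_p|²)`,
set to `0` when `k = 0` or some denominator vanishes. -/
noncomputable def hker {n p : ℕ} (b : (Fin p → Fin n → ℤ) → ℂ)
    (Pj : MvPolynomial (Fin n) ℝ) (r : ℕ)
    (φ : (Fin n → ℤ) → (Fin p → Fin n → ℤ) → ℝ)
    (s : ℂ) (k : Fin n → ℤ) (l : Fin p → Fin n → ℤ) : ℂ :=
  if k = 0 ∨ ∃ i : Fin p, k + ∑ a ∈ Finset.Iic i, l a = 0 then 0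
  else b l * ((MvPolynomial.eval (fun i => ((k i : ℤ) : ℝ)) Pj : ℝ) : ℂ)
        * Complex.exp (Complex.I * ((φ k l : ℝ) : ℂ))
        / ((znorm k : ℂ) ^ (s + (r : ℂ))
            * ∏ i : Fin p, (znorm (k + ∑ a ∈ Finset.Iic i, l a) : ℂ) ^ 2)

open Module Submodule

def intVec (ι : Type*) : (ι → ℤ) →+ EuclideanSpace ℝ ι where
  toFun k := WithLp.toLp 2 fun i => (k i : ℝ)
  map_zero' := by ext; simp
  map_add' _ _ := by ext; simp

lemma intVec_injective (ι : Type*) : Function.Injective (intVec ι) := by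
  intro k k' h
  funext i
  simpa [intVec] using congrArg (· i) h

lemma norm_intVec_sq {ι : Type*} [Fintype ι] (k : ι → ℤ) :
    ‖intVec ι k‖ ^ 2 = ∑ i, (k i : ℝ) ^ 2 := by
  simp [EuclideanSpace.norm_sq_eq, intVec]

lemma summable_norm_intVec_rpow {ι : Type*} [Fintype ι] {r : ℝ} (hr : r < -Fintype.card ι) :
    Summable fun k : ι → ℤ => ‖intVec ι k‖ ^ r := by
  let L := span ℤ (Set.range (EuclideanSpace.basisFun ι ℝ).toBasis)
  have hrank : finrank ℤ L = Fintype.card ι := by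
    rw [ZLattice.rank ℝ L, finrank_euclideanSpace]
  have hmem : ∀ k, intVec ι k ∈ L := fun k => by
    rw [Basis.mem_span_iff_repr_mem]
    intro i
    simp [intVec]
  exact (ZLattice.summable_norm_rpow L r (hrank ▸ hr)).comp_injective
    (i := fun k => (⟨intVec ι k, hmem k⟩ : L))
    fun k k' h => intVec_injective ι (congrArg Subtype.val h)

lemma summable_inv_one_add_norm_intVec_sq_pow {ι : Type*} [Fintype ι] {N : ℕ}
    (hN : Fintype.card ι < 2 * N) :
    Summable fun k : ι → ℤ => ((1 + ‖intVec ι k‖ ^ 2) ^ N)⁻¹ := by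
  refine (summable_norm_intVec_rpow (r := -(2 * N : ℕ))
    (neg_lt_neg (by exact_mod_cast hN))).of_norm_bounded_eventually ?_
  filter_upwards [Filter.eventually_cofinite_ne 0] with k hk
  have hpos : 0 < ‖intVec ι k‖ :=
    norm_pos_iff.mpr ((map_ne_zero_iff _ (intVec_injective ι)).mpr hk)
  rw [Real.rpow_neg hpos.le, Real.rpow_natCast, pow_mul, Real.norm_of_nonneg (by positivity)]
  gcongr
  linarith

lemma znorm_eq_norm_intVec {n : ℕ} (k : Fin n → ℤ) : znorm k = ‖intVec (Fin n) k‖ := by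
  rw [znorm, ← norm_intVec_sq, Real.sqrt_sq (norm_nonneg _)]

lemma znorm_nonneg {n : ℕ} (k : Fin n → ℤ) : 0 ≤ znorm k := Real.sqrt_nonneg _

lemma znorm_sq {n : ℕ} (k : Fin n → ℤ) : znorm k ^ 2 = ∑ i, (k i : ℝ) ^ 2 := by
  rw [znorm_eq_norm_intVec, norm_intVec_sq]

lemma one_le_znorm {n : ℕ} {k : Fin n → ℤ} (hk : k ≠ 0) : 1 ≤ znorm k := by
  obtain ⟨i, hi⟩ := Function.ne_iff.mp hk
  have h1 : 1 ≤ (k i : ℝ) ^ 2 := by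
    rw [one_le_sq_iff_one_le_abs]
    exact_mod_cast Int.one_le_abs hi
  rw [znorm, Real.one_le_sqrt]
  exact h1.trans <| Finset.single_le_sum (f := fun i => (k i : ℝ) ^ 2) (fun _ _ => sq_nonneg _)
    (Finset.mem_univ i)

lemma summable_inv_one_add_sum_znorm_sq_pow {n p N : ℕ} (hN : n * p < 2 * N) :
    Summable fun l : Fin p → Fin n → ℤ => ((1 + ∑ i, znorm (l i) ^ 2) ^ N)⁻¹ := by
  rw [← (Equiv.curry (Fin p) (Fin n) ℤ).summable_iff]
  refine (summable_inv_one_add_norm_intVec_sq_pow (ι := Fin p × Fin n) (N := N)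
    (by simpa [mul_comm] using hN)).congr fun x => ?_
  simp only [Function.comp_apply, norm_intVec_sq, znorm_sq, Fintype.sum_prod_type]
  rfl

lemma norm_le_one_add_norm_mul_norm_add {E : Type*} [SeminormedAddCommGroup E] {x y : E}
    (h : 1 ≤ ‖x + y‖) : ‖x‖ ≤ (1 + ‖y‖) * ‖x + y‖ := by
  have := norm_sub_le (x + y) y
  rw [add_sub_cancel_right] at this
  nlinarith [norm_nonneg y]

lemma one_add_norm_sum_sq_le {ι E : Type*} [Fintype ι] [SeminormedAddCommGroup E]
    (x : ι → E) (s : Finset ι) :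
    (1 + ‖∑ a ∈ s, x a‖) ^ 2 ≤ (1 + Fintype.card ι) ^ 2 * (1 + ∑ a, ‖x a‖ ^ 2) := by
  set R := Real.sqrt (1 + ∑ a, ‖x a‖ ^ 2)
  have hQ : 0 ≤ 1 + ∑ a, ‖x a‖ ^ 2 := by positivity
  have hR1 : 1 ≤ R :=
    Real.one_le_sqrt.mpr (by simpa using Finset.sum_nonneg fun a _ => sq_nonneg ‖x a‖)
  have hxR : ∀ a, ‖x a‖ ≤ R := fun a =>
    (Real.le_sqrt (norm_nonneg _) hQ).mpr <| by
      have := Finset.single_le_sum (f := fun a => ‖x a‖ ^ 2) (fun _ _ => sq_nonneg _)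
        (Finset.mem_univ a)
      linarith
  have hsum : ‖∑ a ∈ s, x a‖ ≤ Fintype.card ι * R :=
    calc ‖∑ a ∈ s, x a‖ ≤ ∑ a ∈ s, ‖x a‖ := norm_sum_le _ _
      _ ≤ s.card * R := by simpa using Finset.sum_le_sum fun a (_ : a ∈ s) => hxR a
      _ ≤ Fintype.card ι * R := by gcongr; exact_mod_cast s.card_le_univ
  calc (1 + ‖∑ a ∈ s, x a‖) ^ 2 ≤ ((1 + Fintype.card ι) * R) ^ 2 := by
        gcongr
        nlinarith
    _ = (1 + Fintype.card ι) ^ 2 * (1 + ∑ a, ‖x a‖ ^ 2) := by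
        rw [mul_pow, Real.sq_sqrt hQ]

lemma MvPolynomial.IsHomogeneous.abs_eval_le {σ : Type*} {j : ℕ} {P : MvPolynomial σ ℝ}
    (hP : P.IsHomogeneous j) {x : σ → ℝ} {R : ℝ} (hx : ∀ i, |x i| ≤ R) :
    |eval x P| ≤ (∑ d ∈ P.support, |coeff d P|) * R ^ j := by
  rw [eval_eq, Finset.sum_mul]
  refine (Finset.abs_sum_le_sum_abs _ _).trans (Finset.sum_le_sum fun d hd => ?_)
  have hdeg : ∑ i ∈ d.support, d i = j := by
    have := hP (mem_support_iff.mp hd)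
    rwa [Pi.one_def, ← Finsupp.degree_eq_weight_one] at this
  rw [abs_mul, Finset.abs_prod, ← hdeg, ← Finset.prod_pow_eq_pow_sum]
  gcongr with i
  rw [abs_pow]
  exact pow_le_pow_left₀ (abs_nonneg _) (hx i) _

lemma abs_le_znorm {n : ℕ} (k : Fin n → ℤ) (i : Fin n) : |(k i : ℝ)| ≤ znorm k := by
  rw [znorm_eq_norm_intVec, ← Real.norm_eq_abs]
  exact PiLp.norm_apply_le (intVec (Fin n) k) i

lemma znorm_sq_le_of_add_sum_ne_zero {n p : ℕ} (k : Fin n → ℤ) (l : Fin p → Fin n → ℤ)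
    (s : Finset (Fin p)) (h : k + ∑ a ∈ s, l a ≠ 0) :
    znorm k ^ 2 ≤
      (1 + p) ^ 2 * (1 + ∑ a, znorm (l a) ^ 2) * znorm (k + ∑ a ∈ s, l a) ^ 2 := by
  have h1 := one_le_znorm h
  simp only [znorm_eq_norm_intVec, map_add, map_sum] at h1 ⊢
  have hv := one_add_norm_sum_sq_le (fun a => intVec (Fin n) (l a)) s
  rw [Fintype.card_fin] at hv
  set v := ∑ a ∈ s, intVec (Fin n) (l a)
  calc ‖intVec (Fin n) k‖ ^ 2 ≤ ((1 + ‖v‖) * ‖intVec (Fin n) k + v‖) ^ 2 := by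
        gcongr
        exact norm_le_one_add_norm_mul_norm_add h1
    _ ≤ _ := by
        rw [mul_pow]
        gcongr

lemma summable_norm_mul_pow_of_sq_decay {α E : Type*} [SeminormedAddCommGroup E] {f : α → E}
    {w : α → ℝ} (hw : ∀ x, 1 ≤ w x) (hf : ∀ m : ℕ, ∃ B, ∀ x, w x ^ m * ‖f x‖ ^ 2 ≤ B) {N : ℕ}
    (hN : Summable fun x => (w x ^ N)⁻¹) (q : ℕ) : Summable fun x => ‖f x‖ * w x ^ q := by
  obtain ⟨B, hB⟩ := hf (2 * (q + N))
  refine (hN.mul_left (1 + B)).of_nonneg_of_le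
    (fun x => mul_nonneg (norm_nonneg _) (pow_nonneg (zero_le_one.trans (hw x)) _)) fun x => ?_
  have hwN : 0 < w x ^ N := pow_pos (zero_lt_one.trans_le (hw x)) N
  -- `a ≤ 1 + a ^ 2` turns the decay of `‖f x‖ ^ 2` into decay of `‖f x‖`
  have ha : ‖f x‖ * w x ^ (q + N) ≤ 1 + B := by
    have := hB x
    rw [pow_mul'] at this
    nlinarith [sq_nonneg (‖f x‖ * w x ^ (q + N) - 1)]
  rw [le_mul_inv_iff₀ hwN, mul_assoc, ← pow_add]
  exact ha

lemma norm_hker_of_ne_zero {n p : ℕ} (b : (Fin p → Fin n → ℤ) → ℂ) (Pj : MvPolynomial (Fin n) ℝ)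
    (r : ℕ) (φ : (Fin n → ℤ) → (Fin p → Fin n → ℤ) → ℝ) (s : ℂ) {k : Fin n → ℤ}
    {l : Fin p → Fin n → ℤ} (hk : k ≠ 0) (hkl : ∀ i, k + ∑ a ∈ Finset.Iic i, l a ≠ 0) :
    ‖hker b Pj r φ s k l‖ = ‖b l‖ * |MvPolynomial.eval (fun i => (k i : ℝ)) Pj| /
      (znorm k ^ (s.re + r) * ∏ i, znorm (k + ∑ a ∈ Finset.Iic i, l a) ^ 2) := by
  have hdeg : ¬(k = 0 ∨ ∃ i, k + ∑ a ∈ Finset.Iic i, l a = 0) := by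
    push Not
    exact ⟨hk, hkl⟩
  rw [hker, if_neg hdeg, norm_div, norm_mul, norm_mul, Complex.norm_exp_I_mul_ofReal,
    Complex.norm_real, Real.norm_eq_abs, mul_one, norm_mul,
    Complex.norm_cpow_eq_rpow_re_of_pos (zero_lt_one.trans_le (one_le_znorm hk)), norm_prod]
  simp [abs_of_nonneg (Real.sqrt_nonneg _), znorm]

lemma norm_hker_le {n p j : ℕ} (b : (Fin p → Fin n → ℤ) → ℂ) {Pj : MvPolynomial (Fin n) ℝ}
    (hPj : Pj.IsHomogeneous j) (r : ℕ) (φ : (Fin n → ℤ) → (Fin p → Fin n → ℤ) → ℝ) (s : ℂ)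
    (k : Fin n → ℤ) (l : Fin p → Fin n → ℤ) :
    ‖hker b Pj r φ s k l‖ ≤ (∑ d ∈ Pj.support, |Pj.coeff d|) * (1 + p) ^ (2 * p) *
      (znorm k ^ (-(s.re + r + 2 * p - j)) * (‖b l‖ * (1 + ∑ i, znorm (l i) ^ 2) ^ p)) := by
  set C := ∑ d ∈ Pj.support, |Pj.coeff d|
  set A := (1 + (p : ℝ)) ^ 2 * (1 + ∑ i, znorm (l i) ^ 2)
  set x := znorm k
  have hx0 : 0 ≤ x := znorm_nonneg k
  have hC : 0 ≤ C := Finset.sum_nonneg fun _ _ => abs_nonneg _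
  by_cases hdeg : k = 0 ∨ ∃ i, k + ∑ a ∈ Finset.Iic i, l a = 0
  · rw [hker, if_pos hdeg, norm_zero]
    have := Real.rpow_nonneg hx0 (-(s.re + r + 2 * p - j))
    positivity
  push Not at hdeg
  obtain ⟨hk, hkl⟩ := hdeg
  have hxpos : 0 < x := zero_lt_one.trans_le (one_le_znorm hk)
  have hA : 0 < A := by positivity
  have hpoly : |MvPolynomial.eval (fun i => (k i : ℝ)) Pj| ≤ C * x ^ j :=
    hPj.abs_eval_le (abs_le_znorm k)
  have hprod : (x ^ 2 / A) ^ p ≤ ∏ i, znorm (k + ∑ a ∈ Finset.Iic i, l a) ^ 2 := by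
    calc (x ^ 2 / A) ^ p = ∏ _i : Fin p, x ^ 2 / A := by
          rw [Finset.prod_const, Finset.card_univ, Fintype.card_fin]
      _ ≤ _ := Finset.prod_le_prod (fun _ _ => div_nonneg (sq_nonneg x) hA.le) fun i _ =>
        (div_le_iff₀' hA).mpr (znorm_sq_le_of_add_sum_ne_zero k l _ (hkl i))
  have hxpow : x ^ (-(s.re + r + 2 * p - j)) = x ^ j / (x ^ (s.re + r) * (x ^ 2) ^ p) := by
    rw [Real.rpow_neg hx0, show s.re + r + 2 * p - j = s.re + r + ((2 * p : ℕ) : ℝ) - (j : ℕ) by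
      push_cast; ring, Real.rpow_sub hxpos, Real.rpow_add hxpos, Real.rpow_natCast,
      Real.rpow_natCast, pow_mul]
    field_simp
  calc ‖hker b Pj r φ s k l‖
      = ‖b l‖ * |MvPolynomial.eval (fun i => (k i : ℝ)) Pj| /
          (x ^ (s.re + r) * ∏ i, znorm (k + ∑ a ∈ Finset.Iic i, l a) ^ 2) :=
        norm_hker_of_ne_zero b Pj r φ s hk hkl
    _ ≤ ‖b l‖ * (C * x ^ j) / (x ^ (s.re + r) * (x ^ 2 / A) ^ p) := by
        have hxs := Real.rpow_pos_of_pos hxpos (s.re + r)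
        exact div_le_div₀ (mul_nonneg (norm_nonneg _) (mul_nonneg hC (pow_nonneg hx0 j)))
          (mul_le_mul_of_nonneg_left hpoly (norm_nonneg _))
          (mul_pos hxs (pow_pos (div_pos (pow_pos hxpos 2) hA) p))
          (mul_le_mul_of_nonneg_left hprod hxs.le)
    _ = _ := by
        rw [hxpow, div_pow, mul_pow, ← pow_mul]
        field_simp
        rw [pow_mul]

/-- for a Schwartz sequence `b`, a homogeneous polynomial `P_j` of degree
`j`, `r ∈ ℕ` and a real phase `φ`, the double series `Σ'_{(k,l)} h(s,k,l)` is absolutely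
summable whenever `Re s > n + j − r − 2p`; in particular the sums over `k` and `l` can
be interchanged. -/
theorem stmt10 {n p : ℕ} (b : (Fin p → Fin n → ℤ) → ℂ)
    (hb : ∀ m : ℕ, ∃ B : ℝ, ∀ l : Fin p → Fin n → ℤ,
        (1 + ∑ i, znorm (l i) ^ 2) ^ m * ‖b l‖ ^ 2 ≤ B)
    (j : ℕ) (Pj : MvPolynomial (Fin n) ℝ) (hPj : Pj.IsHomogeneous j)
    (r : ℕ) (φ : (Fin n → ℤ) → (Fin p → Fin n → ℤ) → ℝ)
    (s : ℂ) (hs : (n : ℝ) + j - r - 2 * p < s.re) :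
    Summable (fun kl : (Fin n → ℤ) × (Fin p → Fin n → ℤ) =>
        ‖hker b Pj r φ s kl.1 kl.2‖) ∧
    (∑' k : Fin n → ℤ, ∑' l : Fin p → Fin n → ℤ, hker b Pj r φ s k l)
      = ∑' l : Fin p → Fin n → ℤ, ∑' k : Fin n → ℤ, hker b Pj r φ s k l := by
  have hk : Summable fun k : Fin n → ℤ => znorm k ^ (-(s.re + r + 2 * p - j)) := by
    simpa only [znorm_eq_norm_intVec] using
      summable_norm_intVec_rpow (ι := Fin n) (r := -(s.re + r + 2 * p - j))
        (by rw [Fintype.card_fin]; linarith)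
  have hl : Summable fun l : Fin p → Fin n → ℤ => ‖b l‖ * (1 + ∑ i, znorm (l i) ^ 2) ^ p :=
    summable_norm_mul_pow_of_sq_decay (fun l => le_add_of_nonneg_right (by positivity)) hb
      (summable_inv_one_add_sum_znorm_sq_pow (n := n) (p := p) (N := n * p + 1) (by omega)) p
  have hnorm : Summable fun kl : (Fin n → ℤ) × (Fin p → Fin n → ℤ) =>
      ‖hker b Pj r φ s kl.1 kl.2‖ :=
    ((hk.mul_of_nonneg hl (fun k => Real.rpow_nonneg (znorm_nonneg k) _)
      (fun l => by positivity)).mul_left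
        ((∑ d ∈ Pj.support, |Pj.coeff d|) * (1 + p) ^ (2 * p))).of_nonneg_of_le
      (fun _ => norm_nonneg _) fun kl => norm_hker_le b hPj r φ s kl.1 kl.2
  exact ⟨hnorm, (hnorm.of_norm.tsum_comm (f := hker b Pj r φ s)).symm⟩
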